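/- Assume the value semigroup Γ = ν(R \ {0}) is symmetric, i.e. c = 2δ. For a standard R-submodule M ⊆ O, the following are equivalent: (1) M is invertible, i.e. M = R·x for a single element x (necessarily with ν(x) = 0, normalizable to x ∈ 1 + zO); (2) Δ_M = Γ; (3) dev(M) = 0; (4) c_M = c. -/

import Mathlib

open PowerSeries

/-- `ν f = n` : the order of the power series `f` equals `n`. -/
def HasOrd {k : Type*} [Semiring k] (f : PowerSeries k) (n : ℕ) : Prop :=
  PowerSeries.coeff n f ≠ 0 ∧ ∀ m < n, PowerSeries.coeff m f = 0

/-- The set of orders of the nonzero elements of `S ⊆ k[[z]]`. -/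
def ValSet {k : Type*} [Semiring k] (S : Set (PowerSeries k)) : Set ℕ :=
  {n | ∃ f ∈ S, HasOrd f n}

/-
The value set `Δ_M` of an `R`-module `M ⊇ z^N·O` controls `M` completely: the monomials `z^d`,
`d ∉ Δ_M`, form a basis of `O/M` (leading terms can be cancelled one by one against elements of
`M`), so `deg(M) = |ℕ \ Δ_M|`, `c_M` is the conductor of `Δ_M`, and an inclusion of such modules
with equal value sets is an equality. Since `M` is standard it contains a unit `x` of `O`, and
`R·x ⊆ M` has value set `Γ`; this gives (1) ⇔ (2) ⇔ (3) and (2) ⇒ (4). For (4) ⇒ (2), symmetry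
of `Γ` means that `n ↦ c - 1 - n` maps `Γ ∩ [0, c)` onto the gaps of `Γ`, so a value `d ∈ Δ_M \ Γ`
would put `c - 1 = n + d` into `Δ_M`, forcing `c_M < c`.
-/

namespace Set

noncomputable def conductor (S : Set ℕ) : ℕ :=
  sInf {c | ∀ n, c ≤ n → n ∈ S}

variable {S T : Set ℕ}

theorem conductor_le {c : ℕ} (h : Ici c ⊆ S) : S.conductor ≤ c :=
  Nat.sInf_le h

theorem Ici_conductor_subset (hS : ∃ N, Ici N ⊆ S) : Ici S.conductor ⊆ S :=
  Nat.sInf_mem hS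

theorem finite_compl_of_Ici_subset {N : ℕ} (hS : Ici N ⊆ S) : Sᶜ.Finite :=
  (finite_Iio N).subset (by simpa only [compl_Ici] using compl_subset_compl.2 hS)

theorem lt_conductor_of_notMem (hS : ∃ N, Ici N ⊆ S) {d : ℕ} (hd : d ∉ S) : d < S.conductor :=
  lt_of_not_ge fun h => hd (Ici_conductor_subset hS h)

theorem conductor_le_pred (hS : ∃ N, Ici N ⊆ S) (hST : S ⊆ T) (hT : S.conductor - 1 ∈ T) :
    T.conductor ≤ S.conductor - 1 := by
  refine conductor_le fun n hn => ?_
  rw [mem_Ici] at hn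
  rcases (show S.conductor - 1 = n ∨ S.conductor ≤ n by omega) with rfl | hn
  · exact hT
  · exact hST (Ici_conductor_subset hS hn)

theorem exists_add_eq_conductor_pred (hadd : ∀ a ∈ S, ∀ b ∈ S, a + b ∈ S)
    (hS : ∃ N, Ici N ⊆ S) (hsym : S.conductor = 2 * Sᶜ.ncard) {d : ℕ} (hd : d ∉ S) :
    ∃ n ∈ S, n + d = S.conductor - 1 := by
  classical
  set c := S.conductor
  have hdc : d < c := lt_conductor_of_notMem hS hd
  have hpred : c - 1 ∉ S := fun h => by
    have := conductor_le_pred hS subset_rfl h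
    omega
  set A := (Finset.range c).filter (· ∈ S)
  set B := (Finset.range c).filter (· ∉ S)
  have hB : (B : Set ℕ) = Sᶜ := by
    ext n
    simp only [B, Finset.coe_filter, Finset.mem_range, mem_ofPred_eq, mem_compl_iff,
      and_iff_right_iff_imp]
    intro hn
    by_contra! h
    exact hn (Ici_conductor_subset hS h)
  have hcard : A.card = B.card := by
    have := Finset.card_filter_add_card_filter_not (s := Finset.range c) (· ∈ S)
    rw [Finset.card_range] at this
    change A.card + B.card = c at this
    have : B.card = Sᶜ.ncard := by rw [← hB, ncard_coe_finset]
    omega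
  have hmaps : A.image (c - 1 - ·) ⊆ B := by
    intro e he
    simp only [Finset.mem_image, A, B, Finset.mem_filter, Finset.mem_range] at he ⊢
    obtain ⟨n, ⟨hnc, hn⟩, rfl⟩ := he
    refine ⟨by omega, fun h => hpred ?_⟩
    simpa [show c - 1 - n + n = c - 1 by omega] using hadd _ h n hn
  have hinj : InjOn (c - 1 - ·) (A : Set ℕ) := by
    intro a ha b hb hab
    simp only [A, Finset.coe_filter, Finset.mem_range, mem_ofPred_eq] at ha hb
    simp only at hab
    omega
  have himage : A.image (c - 1 - ·) = B :=
    Finset.eq_of_subset_of_card_le hmaps (by rw [Finset.card_image_of_injOn hinj, hcard])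
  have hdB : d ∈ B := by simpa [B] using ⟨hdc, hd⟩
  rw [← himage, Finset.mem_image] at hdB
  obtain ⟨n, hn, rfl⟩ := hdB
  simp only [A, Finset.mem_filter, Finset.mem_range] at hn
  exact ⟨n, hn.2, by omega⟩

theorem eq_of_conductor_eq (hadd : ∀ a ∈ S, ∀ b ∈ S, a + b ∈ S) (hS : ∃ N, Ici N ⊆ S)
    (hsym : S.conductor = 2 * Sᶜ.ncard) (hST : S ⊆ T) (hmod : ∀ a ∈ S, ∀ b ∈ T, a + b ∈ T)
    (hc : T.conductor = S.conductor) : T = S := by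
  refine (subset_antisymm hST fun d hdT => ?_).symm
  by_contra hd
  obtain ⟨n, hn, hnd⟩ := exists_add_eq_conductor_pred hadd hS hsym hd
  have hdc := lt_conductor_of_notMem hS hd
  have := conductor_le_pred hS hST (hnd ▸ hmod n hn d hdT)
  omega

end Set

section PowerSeries

variable {k : Type*}

theorem hasOrd_iff_order_eq [Semiring k] {f : k⟦X⟧} {n : ℕ} : HasOrd f n ↔ f.order = n :=
  order_eq_nat.symm

theorem hasOrd_X_pow [Semiring k] [Nontrivial k] (n : ℕ) : HasOrd (X ^ n : k⟦X⟧) n :=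
  hasOrd_iff_order_eq.2 (order_X_pow n)

theorem HasOrd.ne_zero [Semiring k] {f : k⟦X⟧} {n : ℕ} (h : HasOrd f n) : f ≠ 0 := by
  rintro rfl
  exact h.1 (map_zero _)

theorem exists_hasOrd [Semiring k] {f : k⟦X⟧} (hf : f ≠ 0) : ∃ n, HasOrd f n :=
  ⟨_, hasOrd_iff_order_eq.2 (ENat.natCast_toNat (order_finite_iff_ne_zero.2 hf).ne).symm⟩

theorem HasOrd.mul [Semiring k] [NoZeroDivisors k] {f g : k⟦X⟧} {a b : ℕ} (hf : HasOrd f a)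
    (hg : HasOrd g b) : HasOrd (f * g) (a + b) := by
  rw [hasOrd_iff_order_eq] at *
  rw [order_mul, hf, hg, Nat.cast_add]

theorem zero_mem_valSet [Semiring k] [Nontrivial k] {S : Set k⟦X⟧} (h : 1 ∈ S) : 0 ∈ ValSet S :=
  ⟨1, h, by simpa using hasOrd_X_pow (k := k) 0⟩

theorem add_mem_valSet [Semiring k] [NoZeroDivisors k] {S T U : Set k⟦X⟧}
    (hmul : ∀ s ∈ S, ∀ t ∈ T, s * t ∈ U) {a b : ℕ} (ha : a ∈ ValSet S) (hb : b ∈ ValSet T) :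
    a + b ∈ ValSet U := by
  obtain ⟨s, hs, hsa⟩ := ha
  obtain ⟨t, ht, htb⟩ := hb
  exact ⟨s * t, hmul s hs t ht, hsa.mul htb⟩

theorem valSet_mul_right [Semiring k] [NoZeroDivisors k] {A : Type*} [SetLike A k⟦X⟧] (S : A)
    {x : k⟦X⟧} {e : ℕ} (hx : HasOrd x e) :
    ValSet {y | ∃ r ∈ S, y = r * x} = (· + e) '' ValSet (S : Set k⟦X⟧) := by
  ext n
  constructor
  · rintro ⟨_, ⟨r, hr, rfl⟩, hn⟩
    obtain ⟨a, ha⟩ := exists_hasOrd (left_ne_zero_of_mul hn.ne_zero)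
    refine ⟨a, ⟨r, hr, ha⟩, ?_⟩
    have := (hasOrd_iff_order_eq.1 hn).symm.trans (hasOrd_iff_order_eq.1 (ha.mul hx))
    exact_mod_cast this.symm
  · rintro ⟨a, ⟨r, hr, ha⟩, rfl⟩
    exact ⟨r * x, ⟨r, hr, rfl⟩, ha.mul hx⟩

theorem valSet_mul_right_of_zero_mem [Semiring k] [NoZeroDivisors k] {A : Type*}
    [SetLike A k⟦X⟧] (S : A) {x : k⟦X⟧} (h : 0 ∈ ValSet {y | ∃ r ∈ S, y = r * x}) :
    ValSet {y | ∃ r ∈ S, y = r * x} = ValSet (S : Set k⟦X⟧) := by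
  obtain ⟨_, ⟨r, -, rfl⟩, hrx⟩ := id h
  obtain ⟨e, he⟩ := exists_hasOrd (right_ne_zero_of_mul hrx.ne_zero)
  rw [valSet_mul_right S he] at h ⊢
  obtain ⟨a, -, hae⟩ := h
  obtain rfl : e = 0 := Nat.eq_zero_of_add_eq_zero_left hae
  simp

theorem exists_X_pow_succ_dvd_sub_smul [Field k] {f g : k⟦X⟧} {n : ℕ} (hf : HasOrd f n)
    (hg : X ^ n ∣ g) : ∃ a : k, X ^ (n + 1) ∣ g - a • f := by
  refine ⟨coeff n g / coeff n f, X_pow_dvd_iff.2 fun i hi => ?_⟩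
  rcases Nat.lt_succ_iff_lt_or_eq.1 hi with hi | rfl
  · simp [X_pow_dvd_iff.1 hg i hi, hf.2 i hi]
  · simp [div_mul_cancel₀ _ hf.1]

theorem coeff_linearCombination_X_pow [CommSemiring k] (l : ℕ →₀ k) (n : ℕ) :
    coeff n (Finsupp.linearCombination k (fun d => (X : k⟦X⟧) ^ d) l) = l n := by
  simp [Finsupp.linearCombination_apply, map_finsuppSum, coeff_X_pow]

theorem eq_zero_of_linearCombination_X_pow_mem [CommSemiring k] {S : Set k⟦X⟧} {l : ℕ →₀ k}
    (hl : l ∈ Finsupp.supported k k (ValSet S)ᶜ)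
    (hS : Finsupp.linearCombination k (fun d => (X : k⟦X⟧) ^ d) l ∈ S) : l = 0 := by
  set g := Finsupp.linearCombination k (fun d => (X : k⟦X⟧) ^ d) l
  by_cases hg : g = 0
  · ext n
    rw [← coeff_linearCombination_X_pow, Finsupp.coe_zero, Pi.zero_apply]
    exact (congrArg (coeff n) hg).trans (map_zero _)
  obtain ⟨n, hn⟩ := exists_hasOrd hg
  have hsupp : n ∈ l.support := by
    rw [Finsupp.mem_support_iff, ← coeff_linearCombination_X_pow]
    exact hn.1
  exact absurd ⟨g, hS, hn⟩ (hl hsupp)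

variable [Field k] {M : Submodule k k⟦X⟧} {N : ℕ}

theorem X_pow_mul_mem_map_mulRight {R : Subalgebra k k⟦X⟧} (hR : ∀ f, X ^ N * f ∈ R)
    {x : k⟦X⟧} (hx : HasOrd x 0) (f : k⟦X⟧) :
    X ^ N * f ∈ (Subalgebra.toSubmodule R).map (LinearMap.mulRight k x) := by
  have hx0 : constantCoeff x ≠ 0 := by rw [← coeff_zero_eq_constantCoeff_apply]; exact hx.1
  exact ⟨X ^ N * (f * x⁻¹), hR _, by simp [mul_assoc, PowerSeries.inv_mul_cancel x hx0]⟩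

theorem exists_linearCombination_X_pow_sub_mem (hN : ∀ f, X ^ N * f ∈ M) {n : ℕ} {g : k⟦X⟧}
    (hg : X ^ n ∣ g) :
    ∃ l ∈ Finsupp.supported k k ((ValSet (M : Set k⟦X⟧))ᶜ ∩ Set.Ici n),
      g - Finsupp.linearCombination k (fun d => (X : k⟦X⟧) ^ d) l ∈ M := by
  induction hj : N - n generalizing n g with
  | zero =>
    obtain ⟨h, rfl⟩ := (pow_dvd_pow X (by omega : N ≤ n)).trans hg
    exact ⟨0, zero_mem _, by simpa using hN h⟩
  | succ j ih =>
    -- Cancel the coefficient of `X ^ n` against an element of `M` of order `n` if there is one,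
    -- and against the monomial `X ^ n` otherwise.
    have hsucc :
        (ValSet (M : Set k⟦X⟧))ᶜ ∩ Set.Ici (n + 1) ⊆ (ValSet (M : Set k⟦X⟧))ᶜ ∩ Set.Ici n :=
      Set.inter_subset_inter_right _ (Set.Ici_subset_Ici.2 (Nat.le_succ n))
    by_cases hn : n ∈ ValSet (M : Set k⟦X⟧)
    · obtain ⟨f, hfM, hf⟩ := hn
      obtain ⟨a, ha⟩ := exists_X_pow_succ_dvd_sub_smul hf hg
      obtain ⟨l, hl, hlM⟩ := ih ha (by omega)
      refine ⟨l, Finsupp.supported_mono hsucc hl, ?_⟩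
      convert M.add_mem hlM (M.smul_mem a hfM) using 1
      abel
    · obtain ⟨a, ha⟩ := exists_X_pow_succ_dvd_sub_smul (hasOrd_X_pow n) hg
      obtain ⟨l, hl, hlM⟩ := ih ha (by omega)
      refine ⟨Finsupp.single n a + l, add_mem ?_ (Finsupp.supported_mono hsucc hl), ?_⟩
      · exact Finsupp.single_mem_supported k a ⟨hn, Set.self_mem_Ici⟩
      · rwa [map_add, Finsupp.linearCombination_single, sub_add_eq_sub_sub]

theorem Ici_subset_valSet (hN : ∀ f, X ^ N * f ∈ M) : Set.Ici N ⊆ ValSet (M : Set k⟦X⟧) :=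
  fun n hn => ⟨X ^ n, by
    rw [SetLike.mem_coe, ← Nat.add_sub_cancel' hn, pow_add]
    exact hN _, hasOrd_X_pow n⟩

theorem X_pow_mul_mem_of_Ici_subset_valSet (hN : ∀ f, X ^ N * f ∈ M) {c : ℕ}
    (hc : Set.Ici c ⊆ ValSet (M : Set k⟦X⟧)) (f : k⟦X⟧) : X ^ c * f ∈ M := by
  obtain ⟨l, hl, hlM⟩ := exists_linearCombination_X_pow_sub_mem hN (dvd_mul_right (X ^ c) f)
  have hempty : (ValSet (M : Set k⟦X⟧))ᶜ ∩ Set.Ici c = ∅ :=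
    Set.eq_empty_of_forall_notMem fun n hn => hn.1 (hc hn.2)
  rw [hempty, Finsupp.supported_empty, Submodule.mem_bot] at hl
  simpa [hl] using hlM

theorem sInf_X_pow_mul_mem_eq_conductor (hN : ∀ f, X ^ N * f ∈ M) :
    sInf {c | ∀ f : k⟦X⟧, X ^ c * f ∈ M} = (ValSet (M : Set k⟦X⟧)).conductor :=
  le_antisymm
    (Nat.sInf_le (X_pow_mul_mem_of_Ici_subset_valSet hN
      (Set.Ici_conductor_subset ⟨N, Ici_subset_valSet hN⟩)))
    (Set.conductor_le (Ici_subset_valSet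
      (Nat.sInf_mem (s := {c | ∀ f : k⟦X⟧, X ^ c * f ∈ M}) ⟨N, hN⟩)))

theorem eq_of_le_of_valSet_subset {S : Submodule k k⟦X⟧} (hN : ∀ f, X ^ N * f ∈ S) (hSM : S ≤ M)
    (hval : ValSet (M : Set k⟦X⟧) ⊆ ValSet (S : Set k⟦X⟧)) : S = M := by
  refine le_antisymm hSM fun g hg => ?_
  obtain ⟨l, hl, hlS⟩ := exists_linearCombination_X_pow_sub_mem hN (n := 0) (g := g) (by simp)
  have hl0 : l = 0 := by
    refine eq_zero_of_linearCombination_X_pow_mem (S := M)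
      (Finsupp.supported_mono (Set.inter_subset_left.trans (Set.compl_subset_compl.2 hval)) hl) ?_
    simpa using M.sub_mem hg (hSM hlS)
  simpa [hl0] using hlS

theorem finrank_quotient_eq_ncard_compl_valSet (hN : ∀ f, X ^ N * f ∈ M) :
    Module.finrank k (k⟦X⟧ ⧸ M) = (ValSet (M : Set k⟦X⟧))ᶜ.ncard := by
  have hli : LinearIndepOn k (fun d => M.mkQ (X ^ d)) (ValSet (M : Set k⟦X⟧))ᶜ := by
    refine linearIndepOn_iff.2 fun l hl hl0 =>
      eq_zero_of_linearCombination_X_pow_mem (S := M) hl ?_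
    rwa [SetLike.mem_coe, ← M.ker_mkQ, LinearMap.mem_ker, Finsupp.apply_linearCombination]
  have hsp : ⊤ ≤ Submodule.span k
      (Set.range fun d : ↥(ValSet (M : Set k⟦X⟧))ᶜ => M.mkQ (X ^ (d : ℕ))) := by
    rintro q -
    obtain ⟨g, rfl⟩ := M.mkQ_surjective q
    obtain ⟨l, hl, hlM⟩ := exists_linearCombination_X_pow_sub_mem hN (n := 0) (g := g) (by simp)
    rw [← Set.image_eq_range (fun d => M.mkQ (X ^ d)),
      Finsupp.mem_span_image_iff_linearCombination]
    refine ⟨l, Finsupp.supported_mono Set.inter_subset_left hl, ?_⟩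
    exact (Finsupp.apply_linearCombination k M.mkQ _ l).symm.trans
      ((Submodule.Quotient.eq M).2 hlM).symm
  have : Finite ↥(ValSet (M : Set k⟦X⟧))ᶜ :=
    (Set.finite_compl_of_Ici_subset (Ici_subset_valSet hN)).to_subtype
  rw [Module.finrank_eq_nat_card_basis (Module.Basis.mk hli hsp), Nat.card_coe_set_eq]

end PowerSeries

theorem invertible_tfae_general
    {k : Type*} [Field k]
    (R : Subalgebra k (PowerSeries k)) (m : ℕ)
    (hRm : ∀ f : PowerSeries k, PowerSeries.X ^ m * f ∈ R)
    (hsym : sInf {c : ℕ | ∀ n, c ≤ n → n ∈ ValSet (R : Set (PowerSeries k))}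
      = 2 * ((ValSet (R : Set (PowerSeries k)))ᶜ).ncard)
    (M : Submodule k (PowerSeries k))
    (hMR : ∀ r ∈ R, ∀ f ∈ M, r * f ∈ M)
    (hstd : ValSet (R : Set (PowerSeries k)) ⊆ ValSet (M : Set (PowerSeries k))) :
    List.TFAE
      [∃ x : PowerSeries k,
          (M : Set (PowerSeries k)) = {y | ∃ r ∈ R, y = r * x},
        ValSet (M : Set (PowerSeries k)) = ValSet (R : Set (PowerSeries k)),
        Module.finrank k (PowerSeries k ⧸ M)
          = ((ValSet (R : Set (PowerSeries k)))ᶜ).ncard,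
        sInf {c : ℕ | ∀ f : PowerSeries k, PowerSeries.X ^ c * f ∈ M}
          = sInf {c : ℕ | ∀ n, c ≤ n → n ∈ ValSet (R : Set (PowerSeries k))}] := by
  have hΓ : Set.Ici m ⊆ ValSet (R : Set k⟦X⟧) :=
    Ici_subset_valSet (M := Subalgebra.toSubmodule R) hRm
  obtain ⟨x, hxM, hx⟩ := hstd (zero_mem_valSet R.one_mem)
  set Rx := (Subalgebra.toSubmodule R).map (LinearMap.mulRight k x)
  have hRx : (Rx : Set k⟦X⟧) = {y | ∃ r ∈ R, y = r * x} := by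
    ext y
    simp [Rx, eq_comm]
  have hRxM : Rx ≤ M := by
    rintro _ ⟨r, hr, rfl⟩
    exact hMR r hr x hxM
  have hRxm : ∀ f, X ^ m * f ∈ Rx := X_pow_mul_mem_map_mulRight hRm hx
  have hMm : ∀ f, X ^ m * f ∈ M := fun f => hRxM (hRxm f)
  tfae_have 1 → 2 := by
    rintro ⟨y, hy⟩
    rw [hy] at hstd ⊢
    exact valSet_mul_right_of_zero_mem R (hstd (zero_mem_valSet R.one_mem))
  tfae_have 2 → 1 := fun h => ⟨x, by
    rw [← hRx, eq_of_le_of_valSet_subset hRxm hRxM ?_]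
    rw [h, hRx, valSet_mul_right _ hx]
    simp⟩
  tfae_have 2 ↔ 3 := by
    rw [finrank_quotient_eq_ncard_compl_valSet hMm]
    refine ⟨fun h => h ▸ rfl, fun h => compl_injective ?_⟩
    exact Set.eq_of_subset_of_ncard_le (Set.compl_subset_compl.2 hstd) h.ge
      (Set.finite_compl_of_Ici_subset hΓ)
  tfae_have 2 ↔ 4 := by
    rw [sInf_X_pow_mul_mem_eq_conductor hMm]
    refine ⟨fun h => h ▸ rfl, Set.eq_of_conductor_eq ?_ ⟨m, hΓ⟩ hsym hstd ?_⟩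
    · exact fun a ha b hb => add_mem_valSet (fun r hr s hs => R.mul_mem hr hs) ha hb
    · exact fun a ha b hb => add_mem_valSet hMR ha hb
  tfae_finish

/-- Let `R ⊆ O = k[[z]]` be a `k`-subalgebra containing `z^m·O`, with value
semigroup `Γ`, genus `δ` and conductor `c`, and assume `Γ` is symmetric (`c = 2δ`).
For a standard `R`-submodule `M ⊆ O` the following are equivalent:
(1) `M = R·x` for a single element `x`;
(2) `Δ_M = Γ`;
(3) `dev(M) = 0`, i.e. `dim_k(O/M) = δ`;
(4) `c_M = c`. -/
theorem invertible_tfae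
    {k : Type*} [Field k]
    (R : Subalgebra k (PowerSeries k)) (m : ℕ) (hm : 1 ≤ m)
    (hRm : ∀ f : PowerSeries k, PowerSeries.X ^ m * f ∈ R)
    (hsym : sInf {c : ℕ | ∀ n, c ≤ n → n ∈ ValSet (R : Set (PowerSeries k))}
      = 2 * ((ValSet (R : Set (PowerSeries k)))ᶜ).ncard)
    (M : Submodule k (PowerSeries k))
    (hMR : ∀ r ∈ R, ∀ f ∈ M, r * f ∈ M)
    (hstd : ValSet (R : Set (PowerSeries k)) ⊆ ValSet (M : Set (PowerSeries k))) :
    List.TFAE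
      [∃ x : PowerSeries k,
          (M : Set (PowerSeries k)) = {y | ∃ r ∈ R, y = r * x},
        ValSet (M : Set (PowerSeries k)) = ValSet (R : Set (PowerSeries k)),
        Module.finrank k (PowerSeries k ⧸ M)
          = ((ValSet (R : Set (PowerSeries k)))ᶜ).ncard,
        sInf {c : ℕ | ∀ f : PowerSeries k, PowerSeries.X ^ c * f ∈ M}
          = sInf {c : ℕ | ∀ n, c ≤ n → n ∈ ValSet (R : Set (PowerSeries k))}] :=
  invertible_tfae_general R m hRm hsym M hMR hstd
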